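/- Let N be a positive integer and q ∈ ℂ with |q| < 1. Let c, d ∈ ℂ with d ≠ 0 and c·q^k ≠ 1 for 1 ≤ k ≤ N. Then ∑_{n=1}^{N} [N choose n]_q · (c/d;q)_n d^n (−1)^{n−1} q^{n(n+1)/2} / (cq;q)_n = 1 − (dq;q)_N / (cq;q)_N. -/

import Mathlib

open Finset

/-- Finite q-Pochhammer symbol `(a;q)_n = ∏_{k=0}^{n-1} (1 - a q^k)`. -/
noncomputable def qPoch (q a : ℂ) (n : ℕ) : ℂ :=
  ∏ k ∈ Finset.range n, (1 - a * q ^ k)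

/-- Infinite q-Pochhammer symbol `(a;q)_∞ = ∏_{k=0}^{∞} (1 - a q^k)`. -/
noncomputable def qPochInf (q a : ℂ) : ℂ :=
  ∏' k : ℕ, (1 - a * q ^ k)

/-- Gaussian (q-binomial) coefficient `[N choose n]_q`. -/
noncomputable def qBinom (q : ℂ) (N n : ℕ) : ℂ :=
  qPoch q q N / (qPoch q q n * qPoch q q (N - n))

/-
Clearing the denominator `(cq;q)_N`, the identity becomes the polynomial identity
`T_N(c, d) = (dq;q)_N` for
  `T_N(c, d) = ∑_{n=0}^N [N n]_q (-1)^n q^{n(n+1)/2} ∏_{k<n} (d - c q^k) · (cq^{n+1};q)_{N-n}`,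
whose `n = 0` term is `(cq;q)_N`. The q-Pascal rule `[N+1, n+1] = [N, n+1] + q^{N-n} [N, n]` gives
  `T_{N+1}(c, d) = (1 - d q^{N+1}) (1 - c q^{N+1}) T_N(c, d) + c q^{N+1} (1 - d q) T_N(cq, dq)`,
a recursion that `(dq;q)_N` also satisfies, so induction on `N` for all `c, d` at once proves it.
-/

section QPochhammer

variable (q : ℂ)

@[simp]
theorem qPoch_zero (a : ℂ) : qPoch q a 0 = 1 := prod_range_zero _

theorem qPoch_succ (a : ℂ) (n : ℕ) : qPoch q a (n + 1) = qPoch q a n * (1 - a * q ^ n) :=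
  prod_range_succ _ n

theorem qPoch_add (a : ℂ) (m n : ℕ) :
    qPoch q a (m + n) = qPoch q a m * qPoch q (a * q ^ m) n := by
  simp only [qPoch, prod_range_add, mul_assoc, ← pow_add]

theorem qPoch_succ' (a : ℂ) (n : ℕ) : qPoch q a (n + 1) = (1 - a) * qPoch q (a * q) n := by
  rw [add_comm, qPoch_add, pow_one, qPoch, prod_range_one, pow_zero, mul_one]

noncomputable def homQPoch (a b : ℂ) (n : ℕ) : ℂ :=
  ∏ k ∈ range n, (a - b * q ^ k)

theorem homQPoch_succ (a b : ℂ) (n : ℕ) :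
    homQPoch q a b (n + 1) = homQPoch q a b n * (a - b * q ^ n) :=
  prod_range_succ _ n

theorem homQPoch_mul_mul (a b : ℂ) (n : ℕ) :
    homQPoch q (a * q) (b * q) n = q ^ n * homQPoch q a b n := by
  have (k : ℕ) : a * q - b * q * q ^ k = q * (a - b * q ^ k) := by ring
  simp only [homQPoch, this, prod_mul_distrib, prod_const, card_range]

theorem homQPoch_eq_pow_mul_qPoch {a : ℂ} (ha : a ≠ 0) (b : ℂ) (n : ℕ) :
    homQPoch q a b n = a ^ n * qPoch q (b / a) n := by
  have (k : ℕ) : a - b * q ^ k = a * (1 - b / a * q ^ k) := by field_simp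
  simp only [homQPoch, qPoch, this, prod_mul_distrib, prod_const, card_range]

end QPochhammer

theorem qPoch_ne_zero_iff {q a : ℂ} {n : ℕ} : qPoch q a n ≠ 0 ↔ ∀ k < n, a * q ^ k ≠ 1 := by
  simp only [qPoch, Ne, prod_eq_zero_iff, mem_range, sub_eq_zero, not_exists, not_and,
    eq_comm (a := (1 : ℂ))]

theorem qPoch_ne_zero {q a : ℂ} (ha : ‖a‖ < 1) (hq : ‖q‖ ≤ 1) (n : ℕ) : qPoch q a n ≠ 0 := by
  refine qPoch_ne_zero_iff.mpr fun k _ h => ?_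
  have : ‖a * q ^ k‖ < 1 := by
    rw [norm_mul, norm_pow]
    exact mul_lt_one_of_nonneg_of_lt_one_left (norm_nonneg a) ha (pow_le_one₀ (norm_nonneg q) hq)
  rw [h, norm_one] at this
  exact this.false

section GaussBinom

variable (q : ℂ)

/-- Defined by the q-Pascal rule rather than as a quotient, so that `sum_gaussBinom_mul_chuTerm` holds for every `q`. -/
def gaussBinom : ℕ → ℕ → ℂ
  | _, 0 => 1
  | 0, _ + 1 => 0
  | N + 1, k + 1 => gaussBinom N (k + 1) + q ^ (N - k) * gaussBinom N k

@[simp]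
theorem gaussBinom_zero_right (N : ℕ) : gaussBinom q N 0 = 1 := by
  cases N <;> rfl

theorem gaussBinom_succ_succ (N k : ℕ) :
    gaussBinom q (N + 1) (k + 1) = gaussBinom q N (k + 1) + q ^ (N - k) * gaussBinom q N k :=
  rfl

theorem gaussBinom_of_lt {N k : ℕ} (h : N < k) : gaussBinom q N k = 0 := by
  induction N generalizing k with
  | zero => obtain ⟨k, rfl⟩ := Nat.exists_eq_add_one_of_ne_zero h.ne'; rfl
  | succ N ih =>
    obtain ⟨k, rfl⟩ := Nat.exists_eq_add_one_of_ne_zero (by omega : k ≠ 0)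
    rw [gaussBinom_succ_succ, ih (by omega), ih (by omega), mul_zero, add_zero]

theorem sum_range_gaussBinom_succ_mul (N : ℕ) (f : ℕ → ℂ) :
    ∑ n ∈ range (N + 2), gaussBinom q (N + 1) n * f n
      = ∑ n ∈ range (N + 1), gaussBinom q N n * (f n + q ^ (N - n) * f (n + 1)) := by
  have hextend : ∑ n ∈ range (N + 1), gaussBinom q N (n + 1) * f (n + 1) + f 0
      = ∑ n ∈ range (N + 1), gaussBinom q N n * f n := by
    rw [← one_mul (f 0), ← gaussBinom_zero_right q N,
      ← sum_range_succ' (fun n => gaussBinom q N n * f n), sum_range_succ,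
      gaussBinom_of_lt q N.lt_succ_self, zero_mul, add_zero]
  rw [sum_range_succ', gaussBinom_zero_right, one_mul]
  simp only [gaussBinom_succ_succ, add_mul, mul_add, sum_add_distrib]
  rw [add_right_comm, hextend]
  exact congrArg _ (sum_congr rfl fun n _ => by ring)

variable {q}

theorem qBinom_zero_right (N : ℕ) (hq : qPoch q q N ≠ 0) : qBinom q N 0 = 1 := by
  rw [qBinom, qPoch_zero, one_mul, Nat.sub_zero, div_self hq]

theorem qBinom_self (N : ℕ) (hq : qPoch q q N ≠ 0) : qBinom q N N = 1 := by
  rw [qBinom, Nat.sub_self, qPoch_zero, mul_one, div_self hq]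

theorem qBinom_succ_succ (hq : ∀ m, qPoch q q m ≠ 0) {N k : ℕ} (h : k < N) :
    qBinom q (N + 1) (k + 1) = qBinom q N (k + 1) + q ^ (N - k) * qBinom q N k := by
  obtain ⟨m, rfl⟩ := Nat.exists_eq_add_of_lt h
  have hm := hq (m + 1); have hk := hq (k + 1); have := hq (k + m + 1)
  rw [qPoch_succ, mul_ne_zero_iff] at hm hk
  simp only [qBinom, show k + m + 1 + 1 - (k + 1) = m + 1 by omega,
    show k + m + 1 - (k + 1) = m by omega, show k + m + 1 - k = m + 1 by omega,
    qPoch_succ q q (k + m + 1), qPoch_succ q q m, qPoch_succ q q k]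
  field_simp [hm.1, hm.2, hk.1, hk.2]
  ring

theorem gaussBinom_eq_qBinom (hq : ∀ m, qPoch q q m ≠ 0) {N k : ℕ} (h : k ≤ N) :
    gaussBinom q N k = qBinom q N k := by
  induction N generalizing k with
  | zero => rw [Nat.le_zero.mp h, gaussBinom_zero_right, qBinom_zero_right 0 (hq 0)]
  | succ N ih =>
    rcases k with _ | k
    · rw [gaussBinom_zero_right, qBinom_zero_right _ (hq _)]
    rcases (Nat.succ_le_succ_iff.mp h).lt_or_eq with hk | rfl
    · rw [gaussBinom_succ_succ, ih hk, ih hk.le, qBinom_succ_succ hq hk]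
    · rw [gaussBinom_succ_succ, gaussBinom_of_lt q k.lt_succ_self, ih le_rfl, Nat.sub_self,
        qBinom_self _ (hq _), qBinom_self _ (hq _), pow_zero, one_mul, zero_add]

end GaussBinom

section Chu

variable (q : ℂ)

/-- `(-1)^n q^{n(n+1)/2} d^n (c/d;q)_n`, in homogeneous form so that `d = 0` is allowed. -/
noncomputable def chuWeight (c d : ℂ) (n : ℕ) : ℂ :=
  (-1) ^ n * q ^ (n * (n + 1) / 2) * homQPoch q d c n

/-- `-[N n]_q · chuTerm q c d N n / (cq;q)_N` is the `n`-th summand of the theorem. -/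
noncomputable def chuTerm (c d : ℂ) (N n : ℕ) : ℂ :=
  chuWeight q c d n * qPoch q (c * q ^ (n + 1)) (N - n)

theorem chuWeight_succ (c d : ℂ) (n : ℕ) :
    chuWeight q c d (n + 1) = -(q ^ (n + 1) * (d - c * q ^ n)) * chuWeight q c d n := by
  have htri : (n + 1) * (n + 1 + 1) / 2 = n * (n + 1) / 2 + (n + 1) := by
    rw [show (n + 1) * (n + 1 + 1) = n * (n + 1) + 2 * (n + 1) by ring,
      Nat.add_mul_div_left _ _ two_pos]
  rw [chuWeight, chuWeight, htri, homQPoch_succ]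
  ring

theorem chuWeight_mul_mul (c d : ℂ) (n : ℕ) :
    chuWeight q (c * q) (d * q) n = q ^ n * chuWeight q c d n := by
  rw [chuWeight, chuWeight, homQPoch_mul_mul]
  ring

theorem chuTerm_pascal {N n : ℕ} (h : n ≤ N) (c d : ℂ) :
    chuTerm q c d (N + 1) n + q ^ (N - n) * chuTerm q c d (N + 1) (n + 1)
      = (1 - d * q ^ (N + 1)) * (1 - c * q ^ (N + 1)) * chuTerm q c d N n
        + c * q ^ (N + 1) * (1 - d * q) * chuTerm q (c * q) (d * q) N n := by
  have hpow : q ^ (N - n) * q ^ (n + 1) = q ^ (N + 1) := by rw [← pow_add]; congr 1; omega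
  have htop := qPoch_succ q (c * q ^ (n + 1)) (N - n)
  have hbot := qPoch_succ' q (c * q ^ (n + 1)) (N - n)
  rw [mul_assoc, ← pow_add, show n + 1 + (N - n) = N + 1 by omega] at htop
  rw [mul_assoc c, ← pow_succ] at hbot
  simp only [chuTerm]
  rw [show N + 1 - n = N - n + 1 by omega, Nat.add_sub_add_right, mul_assoc c q, ← pow_succ',
    chuWeight_succ, chuWeight_mul_mul]
  set w := chuWeight q c d n
  linear_combination (1 - d * q ^ (N + 1)) * w * htop + q ^ (N + 1) * d * w * hbot
    - (d - c * q ^ n) * w * qPoch q (c * q ^ (n + 1 + 1)) (N - n) * hpow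

theorem sum_gaussBinom_mul_chuTerm (N : ℕ) (c d : ℂ) :
    ∑ n ∈ range (N + 1), gaussBinom q N n * chuTerm q c d N n = qPoch q (d * q) N := by
  induction N generalizing c d with
  | zero => simp [chuTerm, chuWeight, homQPoch]
  | succ N ih =>
    have hrec : qPoch q (d * q) (N + 1)
        = (1 - d * q ^ (N + 1)) * (1 - c * q ^ (N + 1)) * qPoch q (d * q) N
          + c * q ^ (N + 1) * (1 - d * q) * qPoch q (d * q * q) N := by
      linear_combination (1 - c * q ^ (N + 1)) * qPoch_succ q (d * q) N
        + c * q ^ (N + 1) * qPoch_succ' q (d * q) N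
    rw [sum_range_gaussBinom_succ_mul, hrec, ← ih c d, ← ih (c * q) (d * q), mul_sum, mul_sum,
      ← sum_add_distrib]
    refine sum_congr rfl fun n hn => ?_
    rw [chuTerm_pascal q (mem_range_succ_iff.mp hn)]
    ring

theorem sum_Icc_gaussBinom_mul_chuTerm (N : ℕ) (c d : ℂ) :
    ∑ n ∈ Icc 1 N, gaussBinom q N n * chuTerm q c d N n
      = qPoch q (d * q) N - qPoch q (c * q) N := by
  rw [← sum_gaussBinom_mul_chuTerm q N c d, range_eq_Ico, sum_eq_sum_Ico_succ_bot N.succ_pos,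
    zero_add, Nat.succ_eq_add_one, Ico_add_one_right_eq_Icc]
  simp [chuTerm, chuWeight, homQPoch]

end Chu

theorem qBinom_mul_qPoch_div_eq_neg_chuTerm {q c d : ℂ} (hd : d ≠ 0) {N n : ℕ} (hn : 1 ≤ n)
    (hnN : n ≤ N) (hc : qPoch q (c * q) N ≠ 0) :
    qBinom q N n * (qPoch q (c / d) n * d ^ n * (-1) ^ (n - 1) * q ^ (n * (n + 1) / 2))
        / qPoch q (c * q) n
      = -(qBinom q N n * chuTerm q c d N n) / qPoch q (c * q) N := by
  have hsplit : qPoch q (c * q) N = qPoch q (c * q) n * qPoch q (c * q ^ (n + 1)) (N - n) := by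
    rw [pow_succ', ← mul_assoc, ← qPoch_add, Nat.add_sub_cancel' hnN]
  rw [hsplit] at hc ⊢
  obtain ⟨hn₁, hn₂⟩ := mul_ne_zero_iff.mp hc
  obtain ⟨m, rfl⟩ := Nat.exists_eq_add_of_le' hn
  rw [chuTerm, chuWeight, homQPoch_eq_pow_mul_qPoch q hd, Nat.add_sub_cancel,
    pow_succ (-1 : ℂ) m]
  field_simp

theorem stmt_10_general (N : ℕ) (q c d : ℂ) (hq : ‖q‖ < 1)
    (hd : d ≠ 0) (hcq : ∀ k ∈ Finset.Icc 1 N, c * q ^ k ≠ 1) :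
    ∑ n ∈ Finset.Icc 1 N, qBinom q N n *
        (qPoch q (c / d) n * d ^ n * (-1) ^ (n - 1) * q ^ (n * (n + 1) / 2)) /
        qPoch q (c * q) n
      = 1 - qPoch q (d * q) N / qPoch q (c * q) N := by
  have hqq : ∀ m, qPoch q q m ≠ 0 := qPoch_ne_zero hq hq.le
  have hc : qPoch q (c * q) N ≠ 0 := qPoch_ne_zero_iff.mpr fun k hk => by
    rw [mul_assoc, ← pow_succ']
    exact hcq (k + 1) (mem_Icc.mpr ⟨k.succ_pos, hk⟩)
  rw [sum_congr rfl fun n hn => by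
      rw [qBinom_mul_qPoch_div_eq_neg_chuTerm hd (mem_Icc.mp hn).1 (mem_Icc.mp hn).2 hc,
        ← gaussBinom_eq_qBinom hqq (mem_Icc.mp hn).2],
    ← sum_div, sum_neg_distrib, sum_Icc_gaussBinom_mul_chuTerm, neg_sub, sub_div, div_self hc]

theorem stmt_10 (N : ℕ) (hN : 1 ≤ N) (q c d : ℂ) (hq : ‖q‖ < 1)
    (hd : d ≠ 0) (hcq : ∀ k ∈ Finset.Icc 1 N, c * q ^ k ≠ 1) :
    ∑ n ∈ Finset.Icc 1 N, qBinom q N n *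
        (qPoch q (c / d) n * d ^ n * (-1) ^ (n - 1) * q ^ (n * (n + 1) / 2)) /
        qPoch q (c * q) n
      = 1 - qPoch q (d * q) N / qPoch q (c * q) N :=
  stmt_10_general N q c d hq hd hcq
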